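/- Let E be a real inner product space, let r_t : E → ℝ (for integers t, with r_s ≡ 0 for s ≤ 0) be differentiable functions, let w ≥ 1, T ≥ 1 be integers, δ ≥ 0, M ≥ 0, and let m(·; t) : E → E for t ∈ {1,…,T} be gradient generators. Define u_{w,t}(θ) = (1/w) · Σ_{i=0}^{w-1} r_{t-i}(θ) and m̄(θ; t) = (1/w) · (m(θ; t) + Σ_{i=1}^{w-1} ∇r_{t-i}(θ)). Suppose ‖∇r_t(θ)‖ ≤ M and ‖m(θ; t)‖ ≤ M for all θ ∈ E and t ∈ {1,…,T}, and suppose θ_1,…,θ_T ∈ E satisfy ‖m̄(θ_t; t)‖ ≤ δ for every t ∈ {1,…,T}. Then (1/T) · Σ_{t=1}^T ‖∇u_{w,t}(θ_t)‖² ≤ 2δ² + 8M²/w². -/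

import Mathlib

/-!
The smoothed generator `m̄(·; t)` agrees with the smoothed gradient `∇u_{w,t}` except in the
newest term, where `m(·; t) / w` stands in for `∇r_t / w`; hence
`‖∇u_{w,t} - m̄(·; t)‖ ≤ 2M / w`. With `‖m̄(θ_t; t)‖ ≤ δ` and `(a + b)² ≤ 2a² + 2b²` this gives
`‖∇u_{w,t}(θ_t)‖² ≤ 2δ² + 8M²/w²` for every single `t`, so also on average.
-/

open Finset
open scoped BigOperators

section Norm

variable {F : Type*} [SeminormedAddCommGroup F]

theorem norm_sq_le_of_norm_le_of_norm_sub_le {x y : F} {δ ε : ℝ}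
    (hx : ‖x‖ ≤ δ) (hxy : ‖y - x‖ ≤ ε) : ‖y‖ ^ 2 ≤ 2 * δ ^ 2 + 2 * ε ^ 2 :=
  calc ‖y‖ ^ 2 ≤ (‖x‖ + ‖y - x‖) ^ 2 := by
        gcongr
        exact norm_le_insert' y x
    _ ≤ 2 * (‖x‖ ^ 2 + ‖y - x‖ ^ 2) := add_sq_le
    _ ≤ 2 * (δ ^ 2 + ε ^ 2) := by gcongr
    _ = 2 * δ ^ 2 + 2 * ε ^ 2 := by ring

end Norm

section SmoothedLoss

variable {E : Type*} [NormedAddCommGroup E] [InnerProductSpace ℝ E] [CompleteSpace E]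

section Gradient

variable {f : E → ℝ} {f' x : E}

theorem HasGradientAt.const_mul (h : HasGradientAt f f' x) (c : ℝ) :
    HasGradientAt (fun y => c * f y) (c • f') x := by
  rw [hasGradientAt_iff_hasFDerivAt, map_smul]
  exact (hasGradientAt_iff_hasFDerivAt.mp h).const_mul c

theorem HasGradientAt.fun_sum {ι : Type*} {s : Finset ι} {g : ι → E → ℝ} {g' : ι → E}
    (h : ∀ i ∈ s, HasGradientAt (g i) (g' i) x) :
    HasGradientAt (fun y => ∑ i ∈ s, g i y) (∑ i ∈ s, g' i) x := by
  rw [hasGradientAt_iff_hasFDerivAt, map_sum]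
  exact HasFDerivAt.fun_sum fun i hi => hasGradientAt_iff_hasFDerivAt.mp (h i hi)

end Gradient

noncomputable def smoothedLoss (r : ℤ → E → ℝ) (w : ℕ) (t : ℤ) (θ : E) : ℝ :=
  (1 / (w : ℝ)) * ∑ i ∈ range w, r (t - i) θ

noncomputable def smoothedGenerator (r : ℤ → E → ℝ) (m : ℤ → E → E) (w : ℕ) (t : ℤ) (θ : E) :
    E :=
  (1 / (w : ℝ)) • (m t θ + ∑ i ∈ Icc 1 (w - 1), gradient (r (t - i)) θ)

variable {r : ℤ → E → ℝ} {m : ℤ → E → E} {w : ℕ} {t : ℤ} {θ : E}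

theorem gradient_smoothedLoss (hr : ∀ i < w, DifferentiableAt ℝ (r (t - i)) θ) :
    gradient (smoothedLoss r w t) θ = (1 / (w : ℝ)) • ∑ i ∈ range w, gradient (r (t - i)) θ :=
  (HasGradientAt.fun_sum fun i hi => (hr i (mem_range.mp hi)).hasGradientAt).const_mul _
    |>.gradient

theorem gradient_smoothedLoss_sub_smoothedGenerator (hw : 1 ≤ w)
    (hr : ∀ i < w, DifferentiableAt ℝ (r (t - i)) θ) :
    gradient (smoothedLoss r w t) θ - smoothedGenerator r m w t θ
      = (1 / (w : ℝ)) • (gradient (r t) θ - m t θ) := by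
  obtain ⟨k, rfl⟩ : ∃ k, w = k + 1 := Nat.exists_eq_add_of_le' hw
  rw [gradient_smoothedLoss hr, smoothedGenerator, ← smul_sub,
    sum_range_eq_add_Ico _ (by omega : 0 < k + 1), Nat.add_sub_cancel, Ico_add_one_right_eq_Icc]
  simp only [Nat.cast_zero, sub_zero]
  abel_nf

theorem norm_gradient_smoothedLoss_sub_smoothedGenerator_le {M : ℝ} (hw : 1 ≤ w)
    (hr : ∀ i < w, DifferentiableAt ℝ (r (t - i)) θ)
    (hgrad : ‖gradient (r t) θ‖ ≤ M) (hm : ‖m t θ‖ ≤ M) :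
    ‖gradient (smoothedLoss r w t) θ - smoothedGenerator r m w t θ‖ ≤ 2 * M / w := by
  rw [gradient_smoothedLoss_sub_smoothedGenerator hw hr, norm_smul,
    Real.norm_of_nonneg (by positivity)]
  calc 1 / (w : ℝ) * ‖gradient (r t) θ - m t θ‖ ≤ 1 / (w : ℝ) * (M + M) := by
        gcongr
        exact norm_sub_le_of_le hgrad hm
    _ = 2 * M / w := by ring

theorem norm_gradient_smoothedLoss_sq_le {δ M : ℝ} (hw : 1 ≤ w)
    (hr : ∀ i < w, DifferentiableAt ℝ (r (t - i)) θ)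
    (hgrad : ‖gradient (r t) θ‖ ≤ M) (hm : ‖m t θ‖ ≤ M)
    (hterm : ‖smoothedGenerator r m w t θ‖ ≤ δ) :
    ‖gradient (smoothedLoss r w t) θ‖ ^ 2 ≤ 2 * δ ^ 2 + 8 * M ^ 2 / (w : ℝ) ^ 2 := by
  have := norm_sq_le_of_norm_le_of_norm_sub_le hterm
    (norm_gradient_smoothedLoss_sub_smoothedGenerator_le hw hr hgrad hm)
  linarith [show 2 * (2 * M / w) ^ 2 = 8 * M ^ 2 / (w : ℝ) ^ 2 by ring]

end SmoothedLoss

theorem meta_gradient_descent_regret_minimax_general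
    {E : Type*} [NormedAddCommGroup E] [InnerProductSpace ℝ E] [CompleteSpace E]
    (r : ℤ → E → ℝ) (hrdiff : ∀ t : ℤ, Differentiable ℝ (r t))
    (w T : ℕ) (hw : 1 ≤ w) (hT : 1 ≤ T)
    (δ : ℝ) (M : ℝ)
    (m : ℤ → E → E)
    (hgrad : ∀ t ∈ Finset.Icc (1 : ℤ) (T : ℤ), ∀ θ : E, ‖gradient (r t) θ‖ ≤ M)
    (hm : ∀ t ∈ Finset.Icc (1 : ℤ) (T : ℤ), ∀ θ : E, ‖m t θ‖ ≤ M)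
    (u : ℤ → E → ℝ)
    (hu : ∀ (t : ℤ) (θ : E),
      u t θ = (1 / (w : ℝ)) * ∑ i ∈ Finset.range w, r (t - i) θ)
    (mbar : ℤ → E → E)
    (hmbar : ∀ (t : ℤ) (θ : E),
      mbar t θ = (1 / (w : ℝ)) •
        (m t θ + ∑ i ∈ Finset.Icc 1 (w - 1), gradient (r (t - i)) θ))
    (θ : ℤ → E)
    (hterm : ∀ t ∈ Finset.Icc (1 : ℤ) (T : ℤ), ‖mbar t (θ t)‖ ≤ δ) :
    (1 / (T : ℝ)) * ∑ t ∈ Finset.Icc (1 : ℤ) (T : ℤ), ‖gradient (u t) (θ t)‖ ^ 2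
      ≤ 2 * δ ^ 2 + 8 * M ^ 2 / (w : ℝ) ^ 2 := by
  obtain rfl : u = smoothedLoss r w := funext fun t => funext (hu t)
  obtain rfl : mbar = smoothedGenerator r m w := funext fun t => funext (hmbar t)
  have hcard : #(Icc (1 : ℤ) T) = T := by simp
  have hne : (Icc (1 : ℤ) T).Nonempty := nonempty_Icc.mpr (by exact_mod_cast hT)
  calc (1 / (T : ℝ)) * ∑ t ∈ Icc (1 : ℤ) T, ‖gradient (smoothedLoss r w t) (θ t)‖ ^ 2
      = 𝔼 t ∈ Icc (1 : ℤ) T, ‖gradient (smoothedLoss r w t) (θ t)‖ ^ 2 := by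
        rw [expect_eq_sum_div_card, hcard, one_div_mul_eq_div]
    _ ≤ 2 * δ ^ 2 + 8 * M ^ 2 / (w : ℝ) ^ 2 := expect_le hne fun t ht =>
        norm_gradient_smoothedLoss_sq_le hw (fun i _ => (hrdiff _).differentiableAt)
          (hgrad t ht _) (hm t ht _) (hterm t ht)

/-- Worst-case corollary of **Theorem 1**: with bounded gradients and bounded
gradient generators, Meta Gradient Descent achieves `R_w(T) ≤ 2δ² + 8M²/w²`. -/
theorem meta_gradient_descent_regret_minimax
    {E : Type*} [NormedAddCommGroup E] [InnerProductSpace ℝ E] [CompleteSpace E]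
    (r : ℤ → E → ℝ) (hrdiff : ∀ t : ℤ, Differentiable ℝ (r t))
    (hr0 : ∀ s : ℤ, s ≤ 0 → r s = 0)
    (w T : ℕ) (hw : 1 ≤ w) (hT : 1 ≤ T)
    (δ : ℝ) (hδ : 0 ≤ δ) (M : ℝ) (hM : 0 ≤ M)
    (m : ℤ → E → E)
    (hgrad : ∀ t ∈ Finset.Icc (1 : ℤ) (T : ℤ), ∀ θ : E, ‖gradient (r t) θ‖ ≤ M)
    (hm : ∀ t ∈ Finset.Icc (1 : ℤ) (T : ℤ), ∀ θ : E, ‖m t θ‖ ≤ M)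
    (u : ℤ → E → ℝ)
    (hu : ∀ (t : ℤ) (θ : E),
      u t θ = (1 / (w : ℝ)) * ∑ i ∈ Finset.range w, r (t - i) θ)
    (mbar : ℤ → E → E)
    (hmbar : ∀ (t : ℤ) (θ : E),
      mbar t θ = (1 / (w : ℝ)) •
        (m t θ + ∑ i ∈ Finset.Icc 1 (w - 1), gradient (r (t - i)) θ))
    (θ : ℤ → E)
    (hterm : ∀ t ∈ Finset.Icc (1 : ℤ) (T : ℤ), ‖mbar t (θ t)‖ ≤ δ) :
    (1 / (T : ℝ)) * ∑ t ∈ Finset.Icc (1 : ℤ) (T : ℤ), ‖gradient (u t) (θ t)‖ ^ 2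
      ≤ 2 * δ ^ 2 + 8 * M ^ 2 / (w : ℝ) ^ 2 :=
  meta_gradient_descent_regret_minimax_general r hrdiff w T hw hT δ M m hgrad hm u hu mbar hmbar θ
    hterm
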